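/- arXiv:2104.10219 — 4 statements merged into one kernel-verified Lean document; each statement's English description precedes it below -/
import Mathlib

section
/- Let n be a positive integer, let L₀, U₀ ∈ ℝⁿ with L₀ < U₀ componentwise, and set δ = U₀ - L₀. Let s₀ be a random vector uniformly distributed on the closed box {s : L₀ ≤ s ≤ U₀}, let w be a random vector in ℝⁿ independent of s₀ (with arbitrary distribution), let T_s be an invertible n×n real matrix and T_w an arbitrary n×n real matrix. Then the random vector s = T_s·s₀ + T_w·w has a probability density f with respect to Lebesgue measure, and f(s) ≤ 1/(|det T_s| · ∏_{i=0}^{n-1} δ_i) for almost every s ∈ ℝⁿ. -/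
open MeasureTheory Matrix ProbabilityTheory
open scoped ENNReal

/-- If `s₀` is uniform on the box `[L₀, U₀]`, `w` is an arbitrary
random vector independent of `s₀`, and `T_s` is invertible, then
`s = T_s·s₀ + T_w·w` has a density `f` with respect to Lebesgue measure with
`f ≤ 1/(|det T_s| · ∏ δᵢ)` almost everywhere, where `δ = U₀ - L₀`. -/
theorem stmt5 (n : ℕ) (hn : 0 < n) (L₀ U₀ : Fin n → ℝ) (hLU : ∀ i, L₀ i < U₀ i)
    (δ : Fin n → ℝ) (hδ : δ = U₀ - L₀)
    (Ts Tw : Matrix (Fin n) (Fin n) ℝ) (hTs : IsUnit Ts.det)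
    (Ω : Type*) [MeasurableSpace Ω] (P : Measure Ω) [IsProbabilityMeasure P]
    (s₀ w : Ω → Fin n → ℝ) (hs₀ : Measurable s₀) (hw : Measurable w)
    (hunif : Measure.map s₀ P =
      ((volume : Measure (Fin n → ℝ)) (Set.Icc L₀ U₀))⁻¹ •
        (volume : Measure (Fin n → ℝ)).restrict (Set.Icc L₀ U₀))
    (hindep : IndepFun s₀ w P) :
    ∃ f : (Fin n → ℝ) → ℝ≥0∞, Measurable f ∧
      Measure.map (fun ω => Ts.mulVec (s₀ ω) + Tw.mulVec (w ω)) P =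
        (volume : Measure (Fin n → ℝ)).withDensity f ∧
      ∀ᵐ x ∂(volume : Measure (Fin n → ℝ)),
        f x ≤ ENNReal.ofReal (1 / (|Ts.det| * ∏ i, δ i)) := by
  classical
  subst hδ
  have hdet : Ts.det ≠ 0 := hTs.ne_zero
  have hδpos : ∀ i, 0 < (U₀ - L₀) i := fun i => by simp [sub_pos, hLU i]
  have hprodpos : 0 < ∏ i, (U₀ - L₀) i := Finset.prod_pos fun i _ => hδpos i
  set C : ℝ≥0∞ := ENNReal.ofReal (1 / (|Ts.det| * ∏ i, (U₀ - L₀) i)) with hC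
  -- measurability of the maps involved
  have hmulTs : Measurable Ts.mulVec := by
    have h : Ts.mulVec = fun x => (Matrix.toLin' Ts) x := by
      funext x; rw [Matrix.toLin'_apply]
    rw [h]
    exact (LinearMap.continuous_of_finiteDimensional (Matrix.toLin' Ts)).measurable
  have hmulTw : Measurable Tw.mulVec := by
    have h : Tw.mulVec = fun x => (Matrix.toLin' Tw) x := by
      funext x; rw [Matrix.toLin'_apply]
    rw [h]
    exact (LinearMap.continuous_of_finiteDimensional (Matrix.toLin' Tw)).measurable
  have hmeasF : Measurable (fun p : (Fin n → ℝ) × (Fin n → ℝ) =>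
      Ts.mulVec p.1 + Tw.mulVec p.2) :=
    (hmulTs.comp measurable_fst).add (hmulTw.comp measurable_snd)
  have hsmeas : Measurable (fun ω => Ts.mulVec (s₀ ω) + Tw.mulVec (w ω)) :=
    hmeasF.comp (hs₀.prodMk hw)
  set μ := Measure.map (fun ω => Ts.mulVec (s₀ ω) + Tw.mulVec (w ω)) P with hμdef
  haveI : IsProbabilityMeasure μ := Measure.isProbabilityMeasure_map hsmeas.aemeasurable
  haveI : IsProbabilityMeasure (Measure.map s₀ P) :=
    Measure.isProbabilityMeasure_map hs₀.aemeasurable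
  haveI : IsProbabilityMeasure (Measure.map w P) :=
    Measure.isProbabilityMeasure_map hw.aemeasurable
  -- express μ via the product measure (independence)
  have hμ2 : μ = Measure.map (fun p : (Fin n → ℝ) × (Fin n → ℝ) =>
      Ts.mulVec p.1 + Tw.mulVec p.2) ((Measure.map s₀ P).prod (Measure.map w P)) := by
    rw [← (indepFun_iff_map_prod_eq_prod_map_map hs₀.aemeasurable hw.aemeasurable).mp hindep,
      Measure.map_map hmeasF (hs₀.prodMk hw)]
    rfl
  -- volume of a translated preimage under Ts
  have hvol : ∀ (b : Fin n → ℝ) (A : Set (Fin n → ℝ)),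
      volume ((fun x => Ts.mulVec x + b) ⁻¹' A) =
        ENNReal.ofReal |Ts.det|⁻¹ * volume A := by
    intro b A
    have hdet' : LinearMap.det (Matrix.toLin' Ts) ≠ 0 := by
      rwa [LinearMap.det_toLin']
    have h1 : (fun x => Ts.mulVec x + b) ⁻¹' A =
        (Matrix.toLin' Ts) ⁻¹' ((fun z => z + b) ⁻¹' A) := by
      ext x; simp [Matrix.toLin'_apply]
    rw [h1, MeasureTheory.Measure.addHaar_preimage_linearMap volume hdet',
      measure_preimage_add_right, LinearMap.det_toLin', abs_inv]
  -- the uniform marginal is bounded by a multiple of volume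
  have hcIcc : (volume (Set.Icc L₀ U₀) : ℝ≥0∞)⁻¹ =
      ENNReal.ofReal (∏ i, (U₀ - L₀) i)⁻¹ := by
    simp only [Pi.sub_apply]
    rw [Real.volume_Icc_pi, ← ENNReal.ofReal_prod_of_nonneg
      (fun i _ => sub_nonneg.2 (hLU i).le), ← ENNReal.ofReal_inv_of_pos]
    simpa [Pi.sub_apply] using hprodpos
  have hCeq : ENNReal.ofReal (∏ i, (U₀ - L₀) i)⁻¹ * ENNReal.ofReal |Ts.det|⁻¹ = C := by
    rw [← ENNReal.ofReal_mul (by positivity), hC]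
    congr 1
    rw [one_div, mul_inv, mul_comm]
  -- key bound : μ A ≤ C * volume A
  have key : ∀ A : Set (Fin n → ℝ), MeasurableSet A → μ A ≤ C * volume A := by
    intro A hA
    rw [hμ2, Measure.map_apply hmeasF hA,
      Measure.prod_apply_symm (hmeasF hA)]
    have hbound : ∀ y : Fin n → ℝ,
        (Measure.map s₀ P) ((fun x => Ts.mulVec x + Tw.mulVec y) ⁻¹' A) ≤
          C * volume A := by
      intro y
      have hB : MeasurableSet ((fun x => Ts.mulVec x + Tw.mulVec y) ⁻¹' A) :=
        (hmulTs.add_const (Tw.mulVec y)) hA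
      rw [hunif, Measure.smul_apply, Measure.restrict_apply hB, smul_eq_mul]
      calc (volume (Set.Icc L₀ U₀))⁻¹ *
            volume ((fun x => Ts.mulVec x + Tw.mulVec y) ⁻¹' A ∩ Set.Icc L₀ U₀)
          ≤ (volume (Set.Icc L₀ U₀))⁻¹ *
            volume ((fun x => Ts.mulVec x + Tw.mulVec y) ⁻¹' A) :=
            mul_le_mul_right (measure_mono Set.inter_subset_left) _
        _ = C * volume A := by
            rw [hvol (Tw.mulVec y) A, hcIcc, ← mul_assoc, hCeq]
    calc ∫⁻ y, (Measure.map s₀ P)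
            ((fun x => (x, y)) ⁻¹' ((fun p : (Fin n → ℝ) × (Fin n → ℝ) =>
              Ts.mulVec p.1 + Tw.mulVec p.2) ⁻¹' A)) ∂(Measure.map w P)
        ≤ ∫⁻ _, C * volume A ∂(Measure.map w P) := lintegral_mono fun y => hbound y
      _ = C * volume A := by simp
  have hle : μ ≤ C • volume := by
    rw [Measure.le_iff]
    intro s hs
    simpa using key s hs
  have hac : μ ≪ volume := Measure.absolutelyContinuous_of_le_smul hle
  refine ⟨μ.rnDeriv volume, Measure.measurable_rnDeriv _ _, ?_, ?_⟩
  · rw [Measure.withDensity_rnDeriv_eq _ _ hac]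
  · refine ae_le_of_forall_setLIntegral_le_of_sigmaFinite₀
      (Measure.measurable_rnDeriv _ _).aemeasurable fun s hs _ => ?_
    rw [Measure.setLIntegral_rnDeriv hac]
    calc μ s ≤ C * volume s := key s hs
      _ = ∫⁻ _ in s, C ∂volume := by simp [mul_comm]
end

section
/- Let n be a positive integer. Let L₀, U₀, ε'_l, ε'_u ∈ ℝⁿ with L₀ < U₀ and ε'_l < ε'_u componentwise; set δ = U₀ - L₀ and δ' = ε'_u - ε'_l. Let s₀ be uniformly distributed on the box {s : L₀ ≤ s ≤ U₀}, let w be uniformly distributed on the box {w : ε'_l ≤ w ≤ ε'_u}, with s₀ and w independent, and let T_s and T_w be invertible n×n real matrices. Then the random vector s = T_s·s₀ + T_w·w has a density f with respect to Lebesgue measure satisfying f(s) ≤ min( 1/(|det T_s| · ∏_{i=0}^{n-1} δ_i), 1/(|det T_w| · ∏_{i=0}^{n-1} δ'_i) ) for almost every s ∈ ℝⁿ. -/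
open MeasureTheory Matrix ProbabilityTheory
open scoped ENNReal

lemma measurable_mulVec' {n : ℕ} (T : Matrix (Fin n) (Fin n) ℝ) :
    Measurable (fun v : Fin n → ℝ => T.mulVec v) := by
  have : (fun v : Fin n → ℝ => T.mulVec v) = Matrix.toLin' T := by
    ext v i; simp [Matrix.toLin'_apply]
  rw [this]
  exact (LinearMap.continuous_on_pi _).measurable

lemma unif_push {n : ℕ} (L U : Fin n → ℝ) (hLU : ∀ i, L i < U i)
    (T : Matrix (Fin n) (Fin n) ℝ) (hT : IsUnit T.det) :
    ∃ S : Set (Fin n → ℝ), MeasurableSet S ∧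
      Measure.map (fun v => T.mulVec v)
        (((volume : Measure (Fin n → ℝ)) (Set.Icc L U))⁻¹ •
          (volume : Measure (Fin n → ℝ)).restrict (Set.Icc L U)) =
        (volume : Measure (Fin n → ℝ)).withDensity
          (S.indicator fun _ => ENNReal.ofReal (1 / (|T.det| * ∏ i, (U - L) i))) := by
  classical
  have hdet : T.det ≠ 0 := hT.ne_zero
  have hmeas := measurable_mulVec' T
  have hinj : Function.Injective (fun v : Fin n → ℝ => T.mulVec v) :=
    Matrix.mulVec_injective_iff_isUnit.mpr ((Matrix.isUnit_iff_isUnit_det T).mpr hT)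
  have hcont : Continuous (fun v : Fin n → ℝ => T.mulVec v) := by
    have : (fun v : Fin n → ℝ => T.mulVec v) = Matrix.toLin' T := by
      ext v i; simp [Matrix.toLin'_apply]
    rw [this]; exact LinearMap.continuous_on_pi _
  set S := (fun v : Fin n → ℝ => T.mulVec v) '' Set.Icc L U with hSdef
  have hS : MeasurableSet S := ((isCompact_Icc.image hcont).isClosed).measurableSet
  refine ⟨S, hS, ?_⟩
  have hpre : (fun v : Fin n → ℝ => T.mulVec v) ⁻¹' S = Set.Icc L U :=
    Function.Injective.preimage_image hinj _
  have hmapvol : Measure.map (fun v : Fin n → ℝ => T.mulVec v) volume =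
      ENNReal.ofReal (|T.det|⁻¹) • volume := by
    have : (fun v : Fin n → ℝ => T.mulVec v) = Matrix.toLin' T := by
      ext v i; simp [Matrix.toLin'_apply]
    rw [this]
    simpa [abs_inv] using Real.map_matrix_volume_pi_eq_smul_volume_pi hdet
  have hrestr : Measure.map (fun v : Fin n → ℝ => T.mulVec v) (volume.restrict (Set.Icc L U)) =
      (ENNReal.ofReal (|T.det|⁻¹) • (volume : Measure (Fin n → ℝ))).restrict S := by
    rw [← hmapvol, Measure.restrict_map hmeas hS, hpre]
  have hP : (0:ℝ) < ∏ i, (U - L) i := by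
    apply Finset.prod_pos; intro i _; simpa using sub_pos.mpr (hLU i)
  have hvol : (volume : Measure (Fin n → ℝ)) (Set.Icc L U) =
      ENNReal.ofReal (∏ i, (U - L) i) := by
    rw [Real.volume_Icc_pi, ← ENNReal.ofReal_prod_of_nonneg]
    · rfl
    · intro i _; simpa using (sub_nonneg.mpr (hLU i).le)
  rw [withDensity_indicator hS, withDensity_const, Measure.map_smul, hrestr,
    Measure.restrict_smul, smul_smul, hvol]
  congr 1
  rw [← ENNReal.ofReal_inv_of_pos hP, ← ENNReal.ofReal_mul (by positivity)]
  congr 1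
  have hd : (0:ℝ) < |T.det| := abs_pos.mpr hdet
  field_simp

/-- If `s₀` is uniform on the box `[L₀, U₀]`, `w` is uniform on the
box `[ε'_l, ε'_u]`, `s₀` and `w` are independent, and `T_s`, `T_w` are invertible,
then `s = T_s·s₀ + T_w·w` has a density `f` with respect to Lebesgue measure with
`f ≤ min(1/(|det T_s|·∏δᵢ), 1/(|det T_w|·∏δ'ᵢ))` almost everywhere. -/
theorem stmt6 (n : ℕ) (hn : 0 < n)
    (L₀ U₀ εl εu : Fin n → ℝ) (hLU : ∀ i, L₀ i < U₀ i) (hε : ∀ i, εl i < εu i)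
    (δ δ' : Fin n → ℝ) (hδ : δ = U₀ - L₀) (hδ' : δ' = εu - εl)
    (Ts Tw : Matrix (Fin n) (Fin n) ℝ) (hTs : IsUnit Ts.det) (hTw : IsUnit Tw.det)
    (Ω : Type*) [MeasurableSpace Ω] (P : Measure Ω) [IsProbabilityMeasure P]
    (s₀ w : Ω → Fin n → ℝ) (hs₀ : Measurable s₀) (hw : Measurable w)
    (hs₀unif : Measure.map s₀ P =
      ((volume : Measure (Fin n → ℝ)) (Set.Icc L₀ U₀))⁻¹ •
        (volume : Measure (Fin n → ℝ)).restrict (Set.Icc L₀ U₀))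
    (hwunif : Measure.map w P =
      ((volume : Measure (Fin n → ℝ)) (Set.Icc εl εu))⁻¹ •
        (volume : Measure (Fin n → ℝ)).restrict (Set.Icc εl εu))
    (hindep : IndepFun s₀ w P) :
    ∃ f : (Fin n → ℝ) → ℝ≥0∞, Measurable f ∧
      Measure.map (fun ω => Ts.mulVec (s₀ ω) + Tw.mulVec (w ω)) P =
        (volume : Measure (Fin n → ℝ)).withDensity f ∧
      ∀ᵐ x ∂(volume : Measure (Fin n → ℝ)),
        f x ≤ ENNReal.ofReal (min (1 / (|Ts.det| * ∏ i, δ i))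
          (1 / (|Tw.det| * ∏ i, δ' i))) := by
  classical
  subst hδ hδ'
  obtain ⟨S₁, hS₁, hmap₁⟩ := unif_push L₀ U₀ hLU Ts hTs
  obtain ⟨S₂, hS₂, hmap₂⟩ := unif_push εl εu hε Tw hTw
  set cS : ℝ≥0∞ := ENNReal.ofReal (1 / (|Ts.det| * ∏ i, (U₀ - L₀) i)) with hcS
  set cW : ℝ≥0∞ := ENNReal.ofReal (1 / (|Tw.det| * ∏ i, (εu - εl) i)) with hcW
  set g₁ : (Fin n → ℝ) → ℝ≥0∞ := S₁.indicator fun _ => cS with hg₁def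
  set g₂ : (Fin n → ℝ) → ℝ≥0∞ := S₂.indicator fun _ => cW with hg₂def
  have hg₁ : Measurable g₁ := measurable_const.indicator hS₁
  have hg₂ : Measurable g₂ := measurable_const.indicator hS₂
  set X : Ω → (Fin n → ℝ) := fun ω => Ts.mulVec (s₀ ω) with hXdef
  set Y : Ω → (Fin n → ℝ) := fun ω => Tw.mulVec (w ω) with hYdef
  have hX : Measurable X := (measurable_mulVec' Ts).comp hs₀
  have hY : Measurable Y := (measurable_mulVec' Tw).comp hw
  set μ := Measure.map X P with hμdef
  set ν := Measure.map Y P with hνdef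
  have hμ : μ = volume.withDensity g₁ := by
    rw [hμdef, hXdef, show (fun ω => Ts.mulVec (s₀ ω)) = (fun v => Ts.mulVec v) ∘ s₀ from rfl,
      ← Measure.map_map (measurable_mulVec' Ts) hs₀, hs₀unif, hmap₁]
  have hν : ν = volume.withDensity g₂ := by
    rw [hνdef, hYdef, show (fun ω => Tw.mulVec (w ω)) = (fun v => Tw.mulVec v) ∘ w from rfl,
      ← Measure.map_map (measurable_mulVec' Tw) hw, hwunif, hmap₂]
  haveI : IsProbabilityMeasure μ := Measure.isProbabilityMeasure_map hX.aemeasurable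
  haveI : IsProbabilityMeasure ν := Measure.isProbabilityMeasure_map hY.aemeasurable
  have hXY : IndepFun X Y P := hindep.comp (measurable_mulVec' Ts) (measurable_mulVec' Tw)
  have hprod : Measure.map (fun ω => (X ω, Y ω)) P = μ.prod ν :=
    (indepFun_iff_map_prod_eq_prod_map_map hX.aemeasurable hY.aemeasurable).mp hXY
  have hsum : Measure.map (fun ω => X ω + Y ω) P =
      Measure.map (fun p : (Fin n → ℝ) × (Fin n → ℝ) => p.1 + p.2) (μ.prod ν) := by
    rw [← hprod, Measure.map_map measurable_add (hX.prodMk hY)]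
    rfl
  set f : (Fin n → ℝ) → ℝ≥0∞ := fun x => ∫⁻ y, g₁ (x - y) ∂ν with hfdef
  have hker : Measurable (fun p : (Fin n → ℝ) × (Fin n → ℝ) => g₁ (p.1 - p.2)) :=
    hg₁.comp (measurable_fst.sub measurable_snd)
  have hf : Measurable f := hker.lintegral_prod_right'
  -- total mass of g₁ is 1
  have hg₁int : ∫⁻ x, g₁ x ∂(volume : Measure (Fin n → ℝ)) = 1 := by
    have : (volume.withDensity g₁) Set.univ = 1 := by
      rw [← hμ]; exact measure_univ
    rwa [withDensity_apply _ MeasurableSet.univ, Measure.restrict_univ] at this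
  -- key identity
  have key : Measure.map (fun p : (Fin n → ℝ) × (Fin n → ℝ) => p.1 + p.2) (μ.prod ν) = volume.withDensity f := by
    ext A hA
    have hA' : MeasurableSet {p : (Fin n → ℝ) × (Fin n → ℝ) | p.1 + p.2 ∈ A} := measurable_add hA
    rw [Measure.map_apply measurable_add hA, withDensity_apply _ hA]
    have hindm : Measurable (A.indicator (1 : (Fin n → ℝ) → ℝ≥0∞)) := measurable_one.indicator hA
    calc (μ.prod ν) ((fun p : (Fin n → ℝ) × (Fin n → ℝ) => p.1 + p.2) ⁻¹' A)
        = ∫⁻ x, ν (Prod.mk x ⁻¹' {p : (Fin n → ℝ) × (Fin n → ℝ) | p.1 + p.2 ∈ A}) ∂μ := Measure.prod_apply hA'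
      _ = ∫⁻ x, g₁ x * ν (Prod.mk x ⁻¹' {p : (Fin n → ℝ) × (Fin n → ℝ) | p.1 + p.2 ∈ A}) ∂(volume : Measure (Fin n → ℝ)) := by
          rw [hμ, lintegral_withDensity_eq_lintegral_mul _ hg₁
            (measurable_measure_prodMk_left hA')]
          rfl
      _ = ∫⁻ x, ∫⁻ y, g₁ x * A.indicator 1 (x + y) ∂ν ∂(volume : Measure (Fin n → ℝ)) := by
          congr 1; funext x
          have : ν (Prod.mk x ⁻¹' {p : (Fin n → ℝ) × (Fin n → ℝ) | p.1 + p.2 ∈ A}) =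
              ∫⁻ y, A.indicator 1 (x + y) ∂ν := by
            have hset : MeasurableSet {y : (Fin n → ℝ) | x + y ∈ A} := by
              have h' : {y : (Fin n → ℝ) | x + y ∈ A} = (fun y => x + y) ⁻¹' A := rfl
              rw [h']; exact (measurable_const_add x) hA
            rw [show Prod.mk x ⁻¹' {p : (Fin n → ℝ) × (Fin n → ℝ) | p.1 + p.2 ∈ A} = {y : (Fin n → ℝ) | x + y ∈ A} from rfl,
              ← lintegral_indicator_one hset]
            refine lintegral_congr fun y => ?_
            simp [Set.indicator_apply, Set.mem_setOf_eq]
          have hmeasf : Measurable fun y : (Fin n → ℝ) => A.indicator 1 (x + y) :=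
            hindm.comp (measurable_const_add x)
          rw [this, lintegral_const_mul _ hmeasf]
      _ = ∫⁻ y, ∫⁻ x, g₁ x * A.indicator 1 (x + y) ∂(volume : Measure (Fin n → ℝ)) ∂ν := by
          apply lintegral_lintegral_swap
          exact ((hg₁.comp measurable_fst).mul (hindm.comp measurable_add)).aemeasurable
      _ = ∫⁻ y, ∫⁻ x, g₁ (x - y) * A.indicator 1 x ∂(volume : Measure (Fin n → ℝ)) ∂ν := by
          congr 1; funext y
          have := lintegral_add_right_eq_self
            (μ := (volume : Measure (Fin n → ℝ))) (fun x => g₁ (x - y) * A.indicator 1 x) y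
          simpa [add_sub_cancel_right] using this
      _ = ∫⁻ x, ∫⁻ y, g₁ (x - y) * A.indicator 1 x ∂ν ∂(volume : Measure (Fin n → ℝ)) := by
          symm; apply lintegral_lintegral_swap
          exact (hker.mul (hindm.comp measurable_fst)).aemeasurable
      _ = ∫⁻ x, f x * A.indicator 1 x ∂(volume : Measure (Fin n → ℝ)) := by
          congr 1; funext x
          have hm : Measurable fun y : (Fin n → ℝ) => g₁ (x - y) :=
            hg₁.comp (measurable_const.sub measurable_id)
          rw [hfdef, lintegral_mul_const _ hm]
      _ = ∫⁻ x in A, f x ∂(volume : Measure (Fin n → ℝ)) := by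
          rw [← lintegral_indicator hA]
          congr 1; funext x
          by_cases hx : x ∈ A <;> simp [Set.indicator_apply, hx]
  -- bounds
  have hg₁le : ∀ z, g₁ z ≤ cS := by
    intro z; rw [hg₁def]
    by_cases hz : z ∈ S₁ <;> simp [Set.indicator_apply, hz]
  have hg₂le : ∀ z, g₂ z ≤ cW := by
    intro z; rw [hg₂def]
    by_cases hz : z ∈ S₂ <;> simp [Set.indicator_apply, hz]
  have bound1 : ∀ x, f x ≤ cS := by
    intro x
    calc f x ≤ ∫⁻ _, cS ∂ν := lintegral_mono fun y => hg₁le _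
      _ = cS := by simp
  have bound2 : ∀ x, f x ≤ cW := by
    intro x
    have htr : ∫⁻ y, g₁ (x - y) ∂(volume : Measure (Fin n → ℝ)) = 1 := by
      have hneg : Measure.map (fun y : (Fin n → ℝ) => -y) (volume : Measure (Fin n → ℝ)) = volume :=
        Measure.map_neg_eq_self _
      calc ∫⁻ y, g₁ (x - y) ∂(volume : Measure (Fin n → ℝ))
          = ∫⁻ y, g₁ (x - y) ∂(Measure.map (fun y : (Fin n → ℝ) => -y) volume) := by rw [hneg]
        _ = ∫⁻ y, g₁ (x - (-y)) ∂(volume : Measure (Fin n → ℝ)) := by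
            have hm : Measurable fun y : (Fin n → ℝ) => g₁ (x - y) :=
              hg₁.comp (measurable_const.sub measurable_id)
            rw [lintegral_map hm measurable_neg]
        _ = ∫⁻ y, g₁ (x + y) ∂(volume : Measure (Fin n → ℝ)) := by
            simp [sub_neg_eq_add]
        _ = ∫⁻ y, g₁ y ∂(volume : Measure (Fin n → ℝ)) := lintegral_add_left_eq_self g₁ x
        _ = 1 := hg₁int
    have hm : Measurable fun y : (Fin n → ℝ) => g₁ (x - y) :=
      hg₁.comp (measurable_const.sub measurable_id)
    calc f x = ∫⁻ y, g₂ y * g₁ (x - y) ∂(volume : Measure (Fin n → ℝ)) := by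
          rw [hfdef]
          simp only [hν]
          rw [lintegral_withDensity_eq_lintegral_mul _ hg₂ hm]
          rfl
      _ ≤ ∫⁻ y, cW * g₁ (x - y) ∂(volume : Measure (Fin n → ℝ)) :=
          lintegral_mono fun y => mul_le_mul_left (hg₂le y) _
      _ = cW * ∫⁻ y, g₁ (x - y) ∂(volume : Measure (Fin n → ℝ)) :=
          lintegral_const_mul _ hm
      _ = cW := by rw [htr, mul_one]
  refine ⟨f, hf, ?_, ?_⟩
  · rw [show (fun ω => Ts.mulVec (s₀ ω) + Tw.mulVec (w ω)) = fun ω => X ω + Y ω from rfl,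
      hsum, key]
  · apply Filter.Eventually.of_forall
    intro x
    have : ENNReal.ofReal (min (1 / (|Ts.det| * ∏ i, (U₀ - L₀) i))
        (1 / (|Tw.det| * ∏ i, (εu - εl) i))) = min cS cW := by
      rw [hcS, hcW]
      exact (Monotone.map_min fun _ _ h => ENNReal.ofReal_le_ofReal h)
    rw [this]
    exact le_min (bound1 x) (bound2 x)
end

section
/- Let A_l, A_u, L, U ∈ ℝⁿ with A_l ≤ A_u and L ≤ U componentwise. Let B = {s : A_l ≤ s ≤ A_u}, let S_u = ℝⁿ \ {s : L ≤ s ≤ U} be the unsafe region (the complement of the safe box), and define b₁ = A_u - A_l and b₂ = clip(A_u, L, U) - clip(A_l, L, U), where clip(x, L, U)_i = min(max(x_i, L_i), U_i). Then the Lebesgue measure of S_u ∩ B is at most ∏_{i=0}^{n-1} (b₁)_i - ∏_{i=0}^{n-1} (b₂)_i. -/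
open MeasureTheory

/-- With `B = [A_l, A_u]`, unsafe region `S_u = ℝⁿ \ [L, U]`,
`b₁ = A_u - A_l` and `b₂ = clip(A_u, L, U) - clip(A_l, L, U)`, the Lebesgue
measure of `S_u ∩ B` is at most `∏ᵢ (b₁)ᵢ - ∏ᵢ (b₂)ᵢ`. -/
theorem stmt8 (n : ℕ) (Al Au L U : Fin n → ℝ) (hA : Al ≤ Au) (hLU : L ≤ U)
    (clip : (Fin n → ℝ) → (Fin n → ℝ) → (Fin n → ℝ) → (Fin n → ℝ))
    (hclip : ∀ x L' U' i, clip x L' U' i = min (max (x i) (L' i)) (U' i))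
    (B Su : Set (Fin n → ℝ)) (hB : B = Set.Icc Al Au) (hSu : Su = (Set.Icc L U)ᶜ)
    (b₁ b₂ : Fin n → ℝ) (hb₁ : b₁ = Au - Al) (hb₂ : b₂ = clip Au L U - clip Al L U) :
    (volume : Measure (Fin n → ℝ)) (Su ∩ B) ≤
      ENNReal.ofReal (∏ i, b₁ i - ∏ i, b₂ i) := by
  subst hB hSu hb₁ hb₂
  have hb₂nn : ∀ i, (0:ℝ) ≤ clip Au L U i - clip Al L U i := by
    intro i
    rw [hclip, hclip]
    have h1 := hA i
    have h2 := hLU i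
    simp only [min_def, max_def]
    split_ifs <;> linarith
  have hb₁nn : ∀ i, (0:ℝ) ≤ (Au - Al) i := fun i => by
    simpa using sub_nonneg.2 (hA i)
  -- the safe part of the box
  have hinter : Set.Icc L U ∩ Set.Icc Al Au =
      Set.Icc (fun i => max (L i) (Al i)) (fun i => min (U i) (Au i)) := by
    rw [Set.Icc_inter_Icc]; rfl
  have hkey : ∀ i, ENNReal.ofReal (min (U i) (Au i) - max (L i) (Al i)) =
      ENNReal.ofReal (clip Au L U i - clip Al L U i) := by
    intro i
    rw [hclip, hclip]
    have h1 := hA i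
    have h2 := hLU i
    rcases le_total (min (U i) (Au i) - max (L i) (Al i)) 0 with h | h
    · have : min (max (Au i) (L i)) (U i) - min (max (Al i) (L i)) (U i) = 0 := by
        simp only [min_def, max_def] at *
        split_ifs at * <;> linarith
      rw [this, ENNReal.ofReal_eq_zero.2 h, ENNReal.ofReal_zero]
    · congr 1
      simp only [min_def, max_def] at *
      split_ifs at * <;> linarith
  have hsafe : volume (Set.Icc L U ∩ Set.Icc Al Au) =
      ENNReal.ofReal (∏ i, (clip Au L U - clip Al L U) i) := by
    simp only [Pi.sub_apply]
    rw [hinter, Real.volume_Icc_pi,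
      ENNReal.ofReal_prod_of_nonneg (fun i _ => hb₂nn i)]
    exact Finset.prod_congr rfl fun i _ => hkey i
  have hbox : volume (Set.Icc Al Au) = ENNReal.ofReal (∏ i, (Au - Al) i) := by
    rw [Real.volume_Icc_pi, ENNReal.ofReal_prod_of_nonneg (fun i _ => hb₁nn i)]
    exact Finset.prod_congr rfl fun i _ => by simp
  have hset : (Set.Icc L U)ᶜ ∩ Set.Icc Al Au =
      Set.Icc Al Au \ (Set.Icc L U ∩ Set.Icc Al Au) := by
    ext x; simp [Set.mem_diff, and_comm]
  have hfin : volume (Set.Icc L U ∩ Set.Icc Al Au) ≠ ⊤ :=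
    (lt_of_le_of_lt (measure_mono Set.inter_subset_right)
      (by rw [hbox]; exact ENNReal.ofReal_lt_top)).ne
  simp only [Pi.sub_apply]
  simp only [Pi.sub_apply] at hsafe hbox
  rw [hset, measure_diff Set.inter_subset_right
      ((measurableSet_Icc.inter measurableSet_Icc).nullMeasurableSet) hfin,
    hbox, hsafe,
    ← ENNReal.ofReal_sub _ (Finset.prod_nonneg fun i _ => hb₂nn i)]
end

section
/- Let A_l, A_u, L, U ∈ ℝⁿ with A_l ≤ A_u and L ≤ U componentwise. Let f : ℝⁿ → [0, ∞) be a measurable probability density with respect to Lebesgue measure (∫ f = 1) such that f = 0 almost everywhere outside the box B = {s : A_l ≤ s ≤ A_u} and f(s) ≤ U_f for almost every s. Let b₁ = A_u - A_l and b₂ = clip(A_u, L, U) - clip(A_l, L, U), where clip(x, L, U)_i = min(max(x_i, L_i), U_i). Then the safety probability satisfies ∫_{\{s : L ≤ s ≤ U\}} f(s) ds ≥ 1 - U_f · ( ∏_{i=0}^{n-1} (b₁)_i - ∏_{i=0}^{n-1} (b₂)_i ). -/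
/-!
Since `f` vanishes outside the box `B = [A_l, A_u]`, its total mass `1` is at most its mass on
`[L, U]` plus its mass on `B \ [L, U]`, and the latter is at most `U_f · vol (B \ [L, U])`.
Clipping both corners of `B` to `[L, U]` gives a box of the same volume as `B ∩ [L, U]`, so
`vol (B \ [L, U]) = ∏ b₁ - ∏ b₂`.
-/

open MeasureTheory Set
open scoped ENNReal

theorem min_max_sub_min_max_nonneg {a b : ℝ} (h : a ≤ b) (l u : ℝ) :
    0 ≤ min (max b l) u - min (max a l) u :=
  sub_nonneg.2 <| min_le_min_right u <| max_le_max_right l h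

theorem min_max_sub_min_max_le {a b : ℝ} (h : a ≤ b) (l u : ℝ) :
    min (max b l) u - min (max a l) u ≤ b - a := by
  simp only [min_def, max_def]
  split_ifs <;> linarith

-- Both sides are the length of `[a, b] ∩ [l, u]`, which is `0` when the intersection is empty.
theorem ofReal_min_sub_max_eq_ofReal_min_max_sub_min_max (a b l u : ℝ) :
    ENNReal.ofReal (min b u - max a l) = ENNReal.ofReal (min (max b l) u - min (max a l) u) := by
  have h : max (min b u - max a l) 0 = max (min (max b l) u - min (max a l) u) 0 := by
    simp only [min_def, max_def]
    split_ifs <;> linarith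
  simpa using congrArg ENNReal.ofReal h

section Pi

variable {ι : Type*} [Fintype ι]

theorem Real.volume_Icc_inter_Icc_pi (a b l u : ι → ℝ) :
    volume (Icc a b ∩ Icc l u) =
      ∏ i, ENNReal.ofReal (min (max (b i) (l i)) (u i) - min (max (a i) (l i)) (u i)) := by
  rw [Icc_inter_Icc, Real.volume_Icc_pi]
  exact Finset.prod_congr rfl fun i _ => ofReal_min_sub_max_eq_ofReal_min_max_sub_min_max _ _ _ _

theorem prod_min_max_sub_min_max_le_prod_sub {a b : ι → ℝ} (h : a ≤ b) (l u : ι → ℝ) :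
    ∏ i, (min (max (b i) (l i)) (u i) - min (max (a i) (l i)) (u i)) ≤ ∏ i, (b i - a i) :=
  Finset.prod_le_prod (fun i _ => min_max_sub_min_max_nonneg (h i) _ _)
    fun i _ => min_max_sub_min_max_le (h i) _ _

theorem Real.volume_Icc_sdiff_Icc_pi {a b : ι → ℝ} (h : a ≤ b) (l u : ι → ℝ) :
    volume (Icc a b \ Icc l u) = ENNReal.ofReal (∏ i, (b i - a i) -
      ∏ i, (min (max (b i) (l i)) (u i) - min (max (a i) (l i)) (u i))) := by
  have h_inter_nonneg (i : ι) := min_max_sub_min_max_nonneg (h i) (l i) (u i)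
  rw [← sdiff_self_inter, measure_sdiff inter_subset_left
      (measurableSet_Icc.inter measurableSet_Icc).nullMeasurableSet
      (Real.volume_Icc_inter_Icc_pi a b l u ▸ ENNReal.prod_ne_top fun _ _ => ENNReal.ofReal_ne_top),
    Real.volume_Icc_pi, Real.volume_Icc_inter_Icc_pi,
    ENNReal.ofReal_sub _ (Finset.prod_nonneg fun i _ => h_inter_nonneg i),
    ENNReal.ofReal_prod_of_nonneg fun i _ => sub_nonneg.2 (h i),
    ENNReal.ofReal_prod_of_nonneg fun i _ => h_inter_nonneg i]

end Pi

theorem lintegral_le_setLIntegral_add_mul_measure_sdiff {α : Type*} [MeasurableSpace α]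
    {μ : Measure α} {g : α → ℝ≥0∞} {s : Set α} (t : Set α) {c : ℝ≥0∞}
    (hs : MeasurableSet s) (hsupp : ∀ᵐ x ∂μ, x ∉ s → g x = 0) (hbound : ∀ᵐ x ∂μ, g x ≤ c) :
    ∫⁻ x, g x ∂μ ≤ ∫⁻ x in t, g x ∂μ + c * μ (s \ t) := by
  have h_compl : ∫⁻ x in sᶜ, g x ∂μ = 0 := by
    refine (lintegral_congr_ae ?_).trans lintegral_zero
    filter_upwards [ae_restrict_mem hs.compl, ae_restrict_of_ae hsupp] with x hx hgx
    exact hgx hx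
  have h_sdiff : ∫⁻ x in s \ t, g x ∂μ ≤ c * μ (s \ t) := by
    rw [← setLIntegral_const]
    exact lintegral_mono_ae (ae_restrict_of_ae hbound)
  calc ∫⁻ x, g x ∂μ = ∫⁻ x in s, g x ∂μ := by
        rw [← lintegral_add_compl g hs, h_compl, add_zero]
    _ ≤ ∫⁻ x in t ∪ s \ t, g x ∂μ := lintegral_mono_set (by simp)
    _ ≤ ∫⁻ x in t, g x ∂μ + ∫⁻ x in s \ t, g x ∂μ := lintegral_union_le g t (s \ t)
    _ ≤ ∫⁻ x in t, g x ∂μ + c * μ (s \ t) := by gcongr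

theorem stmt10_general (n : ℕ) (Al Au L U : Fin n → ℝ) (hA : Al ≤ Au)
    (clip : (Fin n → ℝ) → (Fin n → ℝ) → (Fin n → ℝ) → (Fin n → ℝ))
    (hclip : ∀ x L' U' i, clip x L' U' i = min (max (x i) (L' i)) (U' i))
    (b₁ b₂ : Fin n → ℝ) (hb₁ : b₁ = Au - Al) (hb₂ : b₂ = clip Au L U - clip Al L U)
    (f : (Fin n → ℝ) → ℝ) (Uf : ℝ)
    (hnorm : ∫⁻ x, ENNReal.ofReal (f x) ∂(volume : Measure (Fin n → ℝ)) = 1)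
    (hsupp : ∀ᵐ x ∂(volume : Measure (Fin n → ℝ)), x ∉ Set.Icc Al Au → f x = 0)
    (hbound : ∀ᵐ x ∂(volume : Measure (Fin n → ℝ)), f x ≤ Uf) :
    ENNReal.ofReal (1 - Uf * (∏ i, b₁ i - ∏ i, b₂ i)) ≤
      ∫⁻ x in Set.Icc L U, ENNReal.ofReal (f x) ∂(volume : Measure (Fin n → ℝ)) := by
  subst hb₁ hb₂
  simp only [Pi.sub_apply, hclip]
  have hUf : 0 ≤ Uf := by
    by_contra! hneg
    have hzero : (fun x => ENNReal.ofReal (f x)) =ᵐ[volume] 0 :=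
      hbound.mono fun x hx => ENNReal.ofReal_eq_zero.2 (hx.trans hneg.le)
    simp [lintegral_congr_ae hzero] at hnorm
  have hmass := lintegral_le_setLIntegral_add_mul_measure_sdiff (s := Icc Al Au) (Icc L U)
    measurableSet_Icc (hsupp.mono fun x hx hxs => by simp [hx hxs])
    (hbound.mono fun x hx => ENNReal.ofReal_le_ofReal hx)
  calc _ = 1 - ENNReal.ofReal Uf * volume (Icc Al Au \ Icc L U) := by
        rw [ENNReal.ofReal_sub _ <| mul_nonneg hUf <| sub_nonneg.2 <|
            prod_min_max_sub_min_max_le_prod_sub hA L U,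
          ENNReal.ofReal_one, ENNReal.ofReal_mul hUf, Real.volume_Icc_sdiff_Icc_pi hA]
    _ ≤ ∫⁻ x in Icc L U, ENNReal.ofReal (f x) := tsub_le_iff_right.2 (hnorm ▸ hmass)

/-- If `f` is a probability density supported (a.e.) in the box
`B = [A_l, A_u]` and bounded a.e. by `U_f`, then the safety probability
`∫_{[L,U]} f` is at least `1 - U_f · (∏ᵢ (b₁)ᵢ - ∏ᵢ (b₂)ᵢ)`, where
`b₁ = A_u - A_l` and `b₂ = clip(A_u, L, U) - clip(A_l, L, U)`. -/
theorem stmt10 (n : ℕ) (Al Au L U : Fin n → ℝ) (hA : Al ≤ Au) (hLU : L ≤ U)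
    (clip : (Fin n → ℝ) → (Fin n → ℝ) → (Fin n → ℝ) → (Fin n → ℝ))
    (hclip : ∀ x L' U' i, clip x L' U' i = min (max (x i) (L' i)) (U' i))
    (b₁ b₂ : Fin n → ℝ) (hb₁ : b₁ = Au - Al) (hb₂ : b₂ = clip Au L U - clip Al L U)
    (f : (Fin n → ℝ) → ℝ) (Uf : ℝ)
    (hf : Measurable f) (hf0 : ∀ x, 0 ≤ f x)
    (hnorm : ∫⁻ x, ENNReal.ofReal (f x) ∂(volume : Measure (Fin n → ℝ)) = 1)
    (hsupp : ∀ᵐ x ∂(volume : Measure (Fin n → ℝ)), x ∉ Set.Icc Al Au → f x = 0)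
    (hbound : ∀ᵐ x ∂(volume : Measure (Fin n → ℝ)), f x ≤ Uf) :
    ENNReal.ofReal (1 - Uf * (∏ i, b₁ i - ∏ i, b₂ i)) ≤
      ∫⁻ x in Set.Icc L U, ENNReal.ofReal (f x) ∂(volume : Measure (Fin n → ℝ)) :=
  stmt10_general n Al Au L U hA clip hclip b₁ b₂ hb₁ hb₂ f Uf hnorm hsupp hbound
end
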